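/- For any positive integer d and any ε ∈ (0,1), there exists an ε-net N of the unit sphere of ℝ^d with cardinality |N| ≤ 2d(1 + 2/ε)^{d−1}. -/
import Mathlib

open Metric MeasureTheory Set

private lemma pow_sub_pow_le_aux (a b : ℝ) (hb : 0 ≤ b) (hab : b ≤ a) (n : ℕ) :
    a ^ (n + 1) - b ^ (n + 1) ≤ (n + 1) * (a - b) * a ^ n := by
  induction n with
  | zero => simp
  | succ n ih =>
    have hbn : b ^ (n + 1) ≤ a ^ (n + 1) := pow_le_pow_left₀ hb hab _
    have ha : 0 ≤ a := hb.trans hab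
    have han : (0:ℝ) ≤ a ^ n := pow_nonneg ha n
    calc a ^ (n + 2) - b ^ (n + 2)
        = a * (a ^ (n + 1) - b ^ (n + 1)) + b ^ (n + 1) * (a - b) := by ring
      _ ≤ a * ((n + 1) * (a - b) * a ^ n) + a ^ (n + 1) * (a - b) := by
          have h1 : a * (a ^ (n + 1) - b ^ (n + 1)) ≤ a * ((n + 1) * (a - b) * a ^ n) :=
            mul_le_mul_of_nonneg_left ih ha
          have h2 : b ^ (n + 1) * (a - b) ≤ a ^ (n + 1) * (a - b) :=
            mul_le_mul_of_nonneg_right hbn (by linarith)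
          linarith
      _ = (↑(n + 1) + 1) * (a - b) * a ^ (n + 1) := by push_cast; ring

/-- for every d ≥ 1 and ε ∈ (0,1) there is an ε-net of the unit sphere of ℝ^d
of cardinality at most 2d(1 + 2/ε)^{d−1}. -/
theorem sphere_epsilon_net (d : ℕ) (hd : 0 < d) (ε : ℝ) (hε0 : 0 < ε) (hε1 : ε < 1) :
    ∃ N : Finset (EuclideanSpace ℝ (Fin d)),
      (∀ y ∈ N, ‖y‖ = 1) ∧
      (∀ x : EuclideanSpace ℝ (Fin d), ‖x‖ = 1 → ∃ y ∈ N, ‖x - y‖ ≤ ε) ∧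
      (N.card : ℝ) ≤ 2 * d * (1 + 2 / ε) ^ (d - 1) := by
  classical
  set E := EuclideanSpace ℝ (Fin d)
  set B : ℝ := 2 * d * (1 + 2 / ε) ^ (d - 1) with hBdef
  have hε2 : (0:ℝ) < ε / 2 := by linarith
  have hb0 : (0:ℝ) ≤ 1 - ε / 2 := by linarith
  have ha0 : (0:ℝ) < 1 + ε / 2 := by linarith
  have hfr : Module.finrank ℝ E = d := finrank_euclideanSpace_fin
  haveI : Nontrivial E := Module.nontrivial_of_finrank_pos (R := ℝ) (by rw [hfr]; exact hd)
  -- key: any ε-separated subset of the sphere has card ≤ B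
  have key : ∀ N : Finset E, (∀ y ∈ N, ‖y‖ = 1) →
      (∀ y ∈ N, ∀ z ∈ N, y ≠ z → ε ≤ dist y z) → (N.card : ℝ) ≤ B := by
    intro N hN hsep
    set V := volume (ball (0:E) 1) with hVdef
    have hV0 : V ≠ 0 := (measure_ball_pos _ _ one_pos).ne'
    have hVt : V ≠ ⊤ := measure_ball_lt_top.ne
    have hdisj : (↑N : Set E).PairwiseDisjoint (fun y => ball y (ε/2)) := by
      intro y hy z hz hyz
      exact ball_disjoint_ball (by have := hsep y hy z hz hyz; linarith)
    have hsub : (⋃ y ∈ N, ball y (ε/2)) ⊆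
        closedBall (0:E) (1 + ε/2) \ closedBall 0 (1 - ε/2) := by
      intro z hz
      simp only [Set.mem_iUnion] at hz
      obtain ⟨y, hy, hzy⟩ := hz
      have hy1 : dist y 0 = 1 := by simpa [dist_zero_right] using hN y hy
      rw [mem_ball] at hzy
      have ht1 := dist_triangle z y 0
      have ht2 := dist_triangle y z 0
      have hdzy : dist y z = dist z y := dist_comm y z
      constructor
      · rw [mem_closedBall]; linarith
      · intro hmem
        rw [mem_closedBall] at hmem
        linarith
    have hUmeas : MeasurableSet (⋃ y ∈ N, ball y (ε/2)) :=
      MeasurableSet.biUnion N.countable_toSet fun y _ => measurableSet_ball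
    have hUd : Disjoint (closedBall (0:E) (1 - ε/2)) (⋃ y ∈ N, ball y (ε/2)) :=
      Set.disjoint_right.mpr fun z hz => (hsub hz).2
    have hsum : ∑ y ∈ N, volume (ball y (ε/2)) = volume (⋃ y ∈ N, ball y (ε/2)) :=
      (measure_biUnion_finset hdisj fun y _ => measurableSet_ball).symm
    have hle : volume (closedBall (0:E) (1 - ε/2)) + ∑ y ∈ N, volume (ball y (ε/2))
        ≤ volume (closedBall (0:E) (1 + ε/2)) := by
      rw [hsum, ← measure_union hUd hUmeas]
      refine measure_mono (Set.union_subset (closedBall_subset_closedBall (by linarith)) ?_)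
      exact hsub.trans diff_subset
    have h1 : ∀ y ∈ N, volume (ball y (ε/2)) = ENNReal.ofReal ((ε/2)^d) * V := by
      intro y _
      rw [hVdef, Measure.addHaar_ball volume y hε2.le, hfr]
    rw [Finset.sum_congr rfl h1, Finset.sum_const,
        Measure.addHaar_closedBall volume _ hb0, Measure.addHaar_closedBall volume _ ha0.le,
        hfr] at hle
    have hle2 : (ENNReal.ofReal ((1 - ε/2)^d) + N.card * ENNReal.ofReal ((ε/2)^d)) * V
        ≤ ENNReal.ofReal ((1 + ε/2)^d) * V := by
      rw [add_mul, mul_assoc]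
      simpa [nsmul_eq_mul] using hle
    have hle3 : ENNReal.ofReal ((1 - ε/2)^d) + N.card * ENNReal.ofReal ((ε/2)^d)
        ≤ ENNReal.ofReal ((1 + ε/2)^d) :=
      (ENNReal.mul_le_mul_iff_left hV0 hVt).mp hle2
    have hle4 : ENNReal.ofReal ((1 - ε/2)^d + N.card * (ε/2)^d)
        ≤ ENNReal.ofReal ((1 + ε/2)^d) := by
      rw [ENNReal.ofReal_add (pow_nonneg hb0 d) (by positivity),
        ENNReal.ofReal_mul (by positivity), ENNReal.ofReal_natCast]
      exact hle3
    have hreal : (1 - ε/2)^d + (N.card : ℝ) * (ε/2)^d ≤ (1 + ε/2)^d :=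
      (ENNReal.ofReal_le_ofReal_iff (by positivity)).mp hle4
    -- geometric estimate
    obtain ⟨m, rfl⟩ : ∃ m, d = m + 1 := ⟨d - 1, (Nat.succ_pred_eq_of_pos hd).symm⟩
    have hgeom : (1 + ε/2)^(m+1) - (1 - ε/2)^(m+1)
        ≤ (m+1) * ε * (1 + ε/2)^m := by
      have := pow_sub_pow_le_aux (1 + ε/2) (1 - ε/2) hb0 (by linarith) m
      have heq : (1 + ε/2) - (1 - ε/2) = ε := by ring
      calc (1 + ε/2)^(m+1) - (1 - ε/2)^(m+1)
          ≤ (m+1) * ((1 + ε/2) - (1 - ε/2)) * (1 + ε/2)^m := this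
        _ = (m+1) * ε * (1 + ε/2)^m := by rw [heq]
    have hcard : (N.card : ℝ) * (ε/2)^(m+1) ≤ (m+1) * ε * (1 + ε/2)^m := by
      linarith
    have hBmul : B * (ε/2)^(m+1) = (m+1) * ε * (1 + ε/2)^m := by
      have hεne : ε ≠ 0 := hε0.ne'
      have h12 : (1 + 2/ε) * (ε/2) = 1 + ε/2 := by field_simp; ring
      have : B * (ε/2)^(m+1)
          = 2 * (m+1) * (((1 + 2/ε) * (ε/2))^m) * (ε/2) := by
        rw [hBdef]
        simp only [Nat.add_sub_cancel, mul_pow, pow_succ]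
        push_cast
        ring
      rw [this, h12]
      ring
    have hpow : (0:ℝ) < (ε/2)^(m+1) := pow_pos hε2 _
    have := hcard.trans_eq hBmul.symm
    exact le_of_mul_le_mul_right this hpow
  -- take a maximum-cardinality ε-separated subset of the sphere
  set S : Set ℕ := {n : ℕ | ∃ N : Finset E, ((∀ y ∈ N, ‖y‖ = 1) ∧
      ∀ y ∈ N, ∀ z ∈ N, y ≠ z → ε ≤ dist y z) ∧ N.card = n} with hSdef
  have hBdd : BddAbove S := by
    refine ⟨⌈B⌉₊, fun n hn => ?_⟩
    obtain ⟨N, ⟨h1, h2⟩, rfl⟩ := hn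
    have : (N.card : ℝ) ≤ (⌈B⌉₊ : ℝ) := (key N h1 h2).trans (Nat.le_ceil B)
    exact_mod_cast this
  have hne : S.Nonempty := ⟨0, ∅, ⟨by simp, by simp⟩, rfl⟩
  obtain ⟨N, ⟨hN1, hN2⟩, hNcard⟩ := Nat.sSup_mem hne hBdd
  refine ⟨N, hN1, ?_, key N hN1 hN2⟩
  intro x hx
  by_contra hcon
  push_neg at hcon
  have hfar : ∀ y ∈ N, ε < dist x y := by
    intro y hy
    have := hcon y hy
    rw [dist_eq_norm]; linarith
  have hxN : x ∉ N := by
    intro hxN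
    have := hfar x hxN
    simp at this
    linarith
  have hP' : ((∀ y ∈ insert x N, ‖y‖ = 1) ∧
      ∀ y ∈ insert x N, ∀ z ∈ insert x N, y ≠ z → ε ≤ dist y z) := by
    constructor
    · intro y hy
      rcases Finset.mem_insert.mp hy with rfl | hy
      · exact hx
      · exact hN1 y hy
    · intro y hy z hz hyz
      rcases Finset.mem_insert.mp hy with hyx | hy' <;>
        rcases Finset.mem_insert.mp hz with hzx | hz'
      · exact absurd (hyx.trans hzx.symm) hyz
      · subst hyx; exact (hfar z hz').le
      · subst hzx; rw [dist_comm]; exact (hfar y hy').le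
      · exact hN2 y hy' z hz' hyz
  have hmem : (insert x N).card ∈ S := ⟨insert x N, hP', rfl⟩
  have := le_csSup hBdd hmem
  rw [Finset.card_insert_of_notMem hxN, hNcard] at this
  omega
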